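/- For every integer n ≥ 1, the total number of partial matchings of [n] with no neighbor alignments equals Σ_{k=0}^{⌊n/2⌋} e_k(1, 2, ..., n-k), where e_k denotes the elementary symmetric polynomial. -/

import Mathlib

open Finset

/-- `(i, j)` is an arc of the linear representation of the set partition `P` of
`{1, ..., n}`: `i < j`, both lie in the same block, and no element of that block
lies strictly between them. -/
def IsArc {n : ℕ} (P : Finpartition (Finset.Icc 1 n)) (a : ℕ × ℕ) : Prop :=
  a.1 < a.2 ∧ ∃ B ∈ P.parts, a.1 ∈ B ∧ a.2 ∈ B ∧ ∀ c ∈ B, ¬ (a.1 < c ∧ c < a.2)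

/-- The number of arcs of a set partition. -/
noncomputable def numArcs {n : ℕ} (P : Finpartition (Finset.Icc 1 n)) : ℕ :=
  {a : ℕ × ℕ | IsArc P a}.ncard

/-- A partial matching: every block has at most two elements. -/
def IsMatching {n : ℕ} (P : Finpartition (Finset.Icc 1 n)) : Prop :=
  ∀ B ∈ P.parts, B.card ≤ 2

/-- A neighbor alignment: arcs `(i₁, j₁)`, `(i₂, j₂)` with `i₁ < j₁ < i₂ < j₂`
and `j₁ + 1 = i₂`. -/
def HasNbrAlign {n : ℕ} (P : Finpartition (Finset.Icc 1 n)) : Prop :=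
  ∃ a b : ℕ × ℕ, IsArc P a ∧ IsArc P b ∧ a.2 + 1 = b.1

/-- A left nesting: arcs `(i₁, j₁)`, `(i₂, j₂)` with `i₁ < i₂ < j₂ < j₁`
and `i₁ + 1 = i₂`. -/
def HasLeftNesting {n : ℕ} (P : Finpartition (Finset.Icc 1 n)) : Prop :=
  ∃ a b : ℕ × ℕ, IsArc P a ∧ IsArc P b ∧ a.1 + 1 = b.1 ∧ b.2 < a.2

/-- A right nesting: arcs `(i₁, j₁)`, `(i₂, j₂)` with `i₁ < i₂ < j₂ < j₁`
and `j₂ + 1 = j₁`. -/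
def HasRightNesting {n : ℕ} (P : Finpartition (Finset.Icc 1 n)) : Prop :=
  ∃ a b : ℕ × ℕ, IsArc P a ∧ IsArc P b ∧ a.1 < b.1 ∧ b.2 + 1 = a.2

/-- The number of left crossings: pairs of arcs `(i₁, j₁)`, `(i₂, j₂)` with
`i₁ < i₂ < j₁ < j₂` and `i₁ + 1 = i₂`. -/
noncomputable def numLeftCrossings {n : ℕ} (P : Finpartition (Finset.Icc 1 n)) : ℕ :=
  {p : (ℕ × ℕ) × (ℕ × ℕ) |
    IsArc P p.1 ∧ IsArc P p.2 ∧ p.1.1 + 1 = p.2.1 ∧ p.2.1 < p.1.2 ∧ p.1.2 < p.2.2}.ncard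

/-- The number of transients: elements of a block that are neither the minimum
nor the maximum of their block. -/
noncomputable def numTransients {n : ℕ} (P : Finpartition (Finset.Icc 1 n)) : ℕ :=
  {x : ℕ | ∃ B ∈ P.parts, x ∈ B ∧ (∃ y ∈ B, y < x) ∧ (∃ y ∈ B, x < y)}.ncard

/-- `Pnum n k`: the number of partial matchings of `[n]` with exactly `k` arcs
and no neighbor alignments. -/
noncomputable def Pnum (n k : ℕ) : ℕ :=
  {P : Finpartition (Finset.Icc 1 n) |
    IsMatching P ∧ numArcs P = k ∧ ¬ HasNbrAlign P}.ncard

/-- `Qnum n k`: the number of partial matchings of `[n]` with exactly `k` arcs,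
no neighbor alignments and no left nestings. -/
noncomputable def Qnum (n k : ℕ) : ℕ :=
  {P : Finpartition (Finset.Icc 1 n) |
    IsMatching P ∧ numArcs P = k ∧ ¬ HasNbrAlign P ∧ ¬ HasLeftNesting P}.ncard

/-- `Rnum n k`: the number of partial matchings of `[n]` with exactly `k` arcs,
no neighbor alignments, no left nestings and no right nestings. -/
noncomputable def Rnum (n k : ℕ) : ℕ :=
  {P : Finpartition (Finset.Icc 1 n) |
    IsMatching P ∧ numArcs P = k ∧ ¬ HasNbrAlign P ∧ ¬ HasLeftNesting P ∧
      ¬ HasRightNesting P}.ncard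

/-- `Tnum n k`: the number of set partitions of `[n]` with exactly `k` arcs and
no right nestings. -/
noncomputable def Tnum (n k : ℕ) : ℕ :=
  {P : Finpartition (Finset.Icc 1 n) | numArcs P = k ∧ ¬ HasRightNesting P}.ncard

/-- `Stirling m b`: the Stirling number of the second kind, the number of set
partitions of `{1, ..., m}` into `b` blocks. -/
noncomputable def Stirling (m b : ℕ) : ℕ :=
  {P : Finpartition (Finset.Icc 1 m) | P.parts.card = b}.ncard

/-!
A partial matching is determined by its set of arcs, so it suffices to count sets of arcs in
`[n]` with pairwise distinct endpoints and no arc ending right before another one starts. Let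
`M(n, k)` count those with `k` arcs. If `n` is unmatched we are counting in `[n - 1]`; if `n` is
matched to `i`, deleting both points leaves such a set with `k - 1` arcs in `[n - 2]`, and
conversely `i` can be any of `1, …, n - 1` except the `k - 1` values right after a right
endpoint. Hence `M(n, k) = M(n - 1, k) + (n - k) M(n - 2, k - 1)`, which is the recursion
`e_k(1, …, m) = e_k(1, …, m - 1) + m e_{k-1}(1, …, m - 1)` at `m = n - k`.
-/

def succAbove (p x : ℕ) : ℕ := if x < p then x else x + 1

def predAbove (p x : ℕ) : ℕ := if x ≤ p then x else x - 1

lemma succAbove_cases (p x : ℕ) :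
    (x < p ∧ succAbove p x = x) ∨ (p ≤ x ∧ succAbove p x = x + 1) := by
  unfold succAbove; split <;> omega

lemma predAbove_cases (p x : ℕ) :
    (x ≤ p ∧ predAbove p x = x) ∨ (p < x ∧ predAbove p x = x - 1) := by
  unfold predAbove; split <;> omega

lemma succAbove_injective (p : ℕ) : Function.Injective (succAbove p) := fun x y h => by
  have := succAbove_cases p x; have := succAbove_cases p y; omega

lemma succAbove_predAbove {p x : ℕ} (h : x ≠ p) : succAbove p (predAbove p x) = x := by
  have := predAbove_cases p x; have := succAbove_cases p (predAbove p x); omega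

structure IsAlignFreeArcSet (n : ℕ) (A : Finset (ℕ × ℕ)) : Prop where
  bounds : ∀ p ∈ A, 1 ≤ p.1 ∧ p.1 < p.2 ∧ p.2 ≤ n
  disjoint : ∀ p ∈ A, ∀ q ∈ A, p ≠ q → p.1 ≠ q.1 ∧ p.1 ≠ q.2 ∧ p.2 ≠ q.1 ∧ p.2 ≠ q.2
  no_align : ∀ p ∈ A, ∀ q ∈ A, p.2 + 1 ≠ q.1

namespace IsAlignFreeArcSet

variable {n : ℕ} {A : Finset (ℕ × ℕ)}

lemma injOn_fst (hA : IsAlignFreeArcSet n A) : Set.InjOn Prod.fst (A : Set (ℕ × ℕ)) :=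
  fun p hp q hq h => by_contra fun hne => (hA.disjoint p hp q hq hne).1 h

lemma injOn_snd (hA : IsAlignFreeArcSet n A) : Set.InjOn Prod.snd (A : Set (ℕ × ℕ)) :=
  fun p hp q hq h => by_contra fun hne => (hA.disjoint p hp q hq hne).2.2.2 h

lemma card_mul_two_le (hA : IsAlignFreeArcSet n A) : A.card * 2 ≤ n := by
  have hdisj : Disjoint (A.image Prod.fst) (A.image Prod.snd) := by
    simp only [disjoint_left, mem_image, not_exists, not_and]
    rintro _ ⟨p, hp, rfl⟩ q hq hqp
    obtain rfl | hne := eq_or_ne p q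
    · have := hA.bounds p hp; omega
    · exact (hA.disjoint p hp q hq hne).2.1 hqp.symm
  have hsub : A.image Prod.fst ∪ A.image Prod.snd ⊆ Icc 1 n := by
    intro x hx
    rcases mem_union.mp hx with h | h <;> obtain ⟨p, hp, rfl⟩ := mem_image.mp h <;>
      have := hA.bounds p hp <;> simp only [mem_Icc] <;> omega
  calc A.card * 2 = (A.image Prod.fst ∪ A.image Prod.snd).card := by
        rw [card_union_of_disjoint hdisj, card_image_of_injOn hA.injOn_fst,
          card_image_of_injOn hA.injOn_snd, mul_two]
    _ ≤ n := by simpa using card_le_card hsub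

end IsAlignFreeArcSet

open Classical in
noncomputable def arcSets (n : ℕ) : Finset (Finset (ℕ × ℕ)) :=
  (Icc 1 n ×ˢ Icc 1 n).powerset.filter (IsAlignFreeArcSet n)

noncomputable def arcSetsOfCard (n k : ℕ) : Finset (Finset (ℕ × ℕ)) :=
  (arcSets n).filter (·.card = k)

lemma mem_arcSets {n : ℕ} {A : Finset (ℕ × ℕ)} : A ∈ arcSets n ↔ IsAlignFreeArcSet n A := by
  classical
  refine ⟨fun h => (mem_filter.mp h).2, fun h => mem_filter.mpr ⟨mem_powerset.mpr ?_, h⟩⟩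
  intro p hp
  have := h.bounds p hp
  simp only [mem_product, mem_Icc]
  omega

lemma mem_arcSetsOfCard {n k : ℕ} {A : Finset (ℕ × ℕ)} :
    A ∈ arcSetsOfCard n k ↔ IsAlignFreeArcSet n A ∧ A.card = k := by
  simp [arcSetsOfCard, mem_arcSets]

lemma card_arcSets_eq_sum (n : ℕ) :
    (arcSets n).card = ∑ k ∈ range (n / 2 + 1), (arcSetsOfCard n k).card :=
  card_eq_sum_card_fiberwise fun A hA => by
    have := (mem_arcSets.mp hA).card_mul_two_le
    simp only [coe_range, Set.mem_Iio]
    omega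

lemma arcSetsOfCard_zero_right (n : ℕ) : arcSetsOfCard n 0 = {∅} := by
  ext A
  simp only [mem_arcSetsOfCard, card_eq_zero, mem_singleton, and_iff_right_iff_imp]
  rintro rfl
  exact ⟨by simp, by simp, by simp⟩

lemma arcSetsOfCard_eq_empty {n k : ℕ} (h : n < 2 * k) : arcSetsOfCard n k = ∅ := by
  ext A
  simp only [mem_arcSetsOfCard, notMem_empty, iff_false, not_and]
  intro hA hk
  have := hA.card_mul_two_le
  omega

lemma filter_unmatched_arcSetsOfCard (n k : ℕ) :
    (arcSetsOfCard (n + 1) k).filter (fun A => ¬ ∃ p ∈ A, p.2 = n + 1) = arcSetsOfCard n k := by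
  ext A
  simp only [mem_filter, mem_arcSetsOfCard, not_exists, not_and]
  refine ⟨fun ⟨⟨hA, hk⟩, hn⟩ => ⟨⟨fun p hp => ?_, hA.disjoint, hA.no_align⟩, hk⟩,
    fun ⟨hA, hk⟩ => ⟨⟨⟨fun p hp => ?_, hA.disjoint, hA.no_align⟩, hk⟩, fun p hp => ?_⟩⟩
  · have := hA.bounds p hp; have := hn p hp; omega
  · have := hA.bounds p hp; omega
  · have := hA.bounds p hp; omega

def insertionSlots (n : ℕ) (A : Finset (ℕ × ℕ)) : Finset ℕ :=
  (Icc 1 (n + 1)).filter fun i => ∀ q ∈ A, q.2 + 1 ≠ i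

lemma card_insertionSlots {n : ℕ} {A : Finset (ℕ × ℕ)} (hA : IsAlignFreeArcSet n A) :
    (insertionSlots n A).card = n + 1 - A.card := by
  have hslots : insertionSlots n A = Icc 1 (n + 1) \ A.image (·.2 + 1) := by
    ext i
    simp only [insertionSlots, mem_filter, mem_sdiff, mem_image, not_exists, not_and]
  have hinj : Set.InjOn (·.2 + 1) (A : Set (ℕ × ℕ)) := fun p hp q hq h =>
    hA.injOn_snd hp hq (Nat.add_right_cancel h)
  rw [hslots, card_sdiff_of_subset, card_image_of_injOn hinj, Nat.card_Icc, Nat.add_sub_cancel]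
  intro i hi
  obtain ⟨q, hq, rfl⟩ := mem_image.mp hi
  have := hA.bounds q hq
  simp only [mem_Icc]
  omega

def insertArc (n i : ℕ) (A : Finset (ℕ × ℕ)) : Finset (ℕ × ℕ) :=
  insert (i, n + 2) (A.image (Prod.map (succAbove i) (succAbove i)))

section insertArc

variable {n i : ℕ} {A : Finset (ℕ × ℕ)}

lemma eq_of_mem_insertArc (hA : ∀ q ∈ A, q.2 ≤ n)
    {p : ℕ × ℕ} (hp : p ∈ insertArc n i A) (hpn : p.2 = n + 2) : p = (i, n + 2) := by
  rcases mem_insert.mp hp with rfl | hp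
  · rfl
  obtain ⟨q, hq, rfl⟩ := mem_image.mp hp
  have := hA q hq
  have := succAbove_cases i q.2
  simp only [Prod.map_snd] at hpn
  omega

lemma isAlignFreeArcSet_insertArc (hA : IsAlignFreeArcSet n A) (hi : i ∈ insertionSlots n A) :
    IsAlignFreeArcSet (n + 2) (insertArc n i A) := by
  simp only [insertionSlots, mem_filter, mem_Icc] at hi
  have hmem : ∀ p ∈ insertArc n i A,
      p = (i, n + 2) ∨ ∃ q ∈ A, p = (succAbove i q.1, succAbove i q.2) := by
    intro p hp
    rcases mem_insert.mp hp with rfl | hp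
    · exact .inl rfl
    · obtain ⟨q, hq, rfl⟩ := mem_image.mp hp
      exact .inr ⟨q, hq, rfl⟩
  have hfacts : ∀ q ∈ A, (1 ≤ q.1 ∧ q.1 < q.2 ∧ q.2 ≤ n) ∧ q.2 + 1 ≠ i ∧
      ((q.1 < i ∧ succAbove i q.1 = q.1) ∨ (i ≤ q.1 ∧ succAbove i q.1 = q.1 + 1)) ∧
      ((q.2 < i ∧ succAbove i q.2 = q.2) ∨ (i ≤ q.2 ∧ succAbove i q.2 = q.2 + 1)) :=
    fun q hq => ⟨hA.bounds q hq, hi.2 q hq, succAbove_cases i q.1, succAbove_cases i q.2⟩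
  refine ⟨fun p hp => ?_, fun p hp p' hp' hne => ?_, fun p hp p' hp' => ?_⟩
  · rcases hmem p hp with rfl | ⟨q, hq', rfl⟩
    · dsimp only; omega
    · have := hfacts q hq'; dsimp only; omega
  · rcases hmem p hp with rfl | ⟨q, hq', rfl⟩ <;> rcases hmem p' hp' with rfl | ⟨q', hq'', rfl⟩
    · exact absurd rfl hne
    · have := hfacts q' hq''; dsimp only; omega
    · have := hfacts q hq'; dsimp only; omega
    · have hqq : q ≠ q' := by rintro rfl; exact hne rfl
      have := hA.disjoint q hq' q' hq'' hqq
      have := hfacts q hq'; have := hfacts q' hq''; dsimp only; omega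
  · rcases hmem p hp with rfl | ⟨q, hq', rfl⟩ <;> rcases hmem p' hp' with rfl | ⟨q', hq'', rfl⟩
    · dsimp only; omega
    · have := hfacts q' hq''; dsimp only; omega
    · have := hfacts q hq'; dsimp only; omega
    · have := hA.no_align q hq' q' hq''
      have := hfacts q hq'; have := hfacts q' hq''; dsimp only; omega

lemma last_notMem_image_succAbove (hA : ∀ q ∈ A, q.2 ≤ n) :
    (i, n + 2) ∉ A.image (Prod.map (succAbove i) (succAbove i)) := by
  rw [mem_image]
  rintro ⟨q, hq, hqe⟩
  have := hA q hq
  have := succAbove_cases i q.2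
  have := congrArg Prod.snd hqe
  simp only [Prod.map_snd] at this
  omega

lemma card_insertArc (hA : ∀ q ∈ A, q.2 ≤ n) :
    (insertArc n i A).card = A.card + 1 := by
  rw [insertArc, card_insert_of_notMem (last_notMem_image_succAbove hA),
    card_image_of_injective _ ((succAbove_injective i).prodMap (succAbove_injective i))]

lemma insertArc_injective {i' : ℕ} {A' : Finset (ℕ × ℕ)} (hA : ∀ q ∈ A, q.2 ≤ n)
    (hA' : ∀ q ∈ A', q.2 ≤ n) (h : insertArc n i A = insertArc n i' A') : A = A' ∧ i = i' := by
  have hii : (i, n + 2) = (i', n + 2) :=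
    eq_of_mem_insertArc hA' (h ▸ mem_insert_self _ _) rfl
  obtain rfl : i = i' := congrArg Prod.fst hii
  refine ⟨image_injective ((succAbove_injective i).prodMap (succAbove_injective i)) ?_, rfl⟩
  rw [← erase_insert (last_notMem_image_succAbove hA),
    ← erase_insert (last_notMem_image_succAbove hA')]
  exact congrArg (·.erase (i, n + 2)) h

end insertArc

def deleteArc (n i : ℕ) (B : Finset (ℕ × ℕ)) : Finset (ℕ × ℕ) :=
  (B.erase (i, n + 2)).image (Prod.map (predAbove i) (predAbove i))

section deleteArc

variable {n i : ℕ} {B : Finset (ℕ × ℕ)}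

lemma IsAlignFreeArcSet.avoid_of_mem_erase (hB : IsAlignFreeArcSet (n + 2) B)
    (hi : (i, n + 2) ∈ B) {p : ℕ × ℕ} (hp : p ∈ B.erase (i, n + 2)) :
    (1 ≤ p.1 ∧ p.1 < p.2 ∧ p.2 ≤ n + 1) ∧ p.1 ≠ i ∧ p.2 ≠ i ∧ p.2 + 1 ≠ i := by
  obtain ⟨hne, hp⟩ := mem_erase.mp hp
  have := hB.bounds p hp
  have := hB.disjoint p hp _ hi hne
  have := hB.no_align p hp _ hi
  dsimp only at *
  omega

lemma isAlignFreeArcSet_deleteArc (hB : IsAlignFreeArcSet (n + 2) B) (hi : (i, n + 2) ∈ B) :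
    IsAlignFreeArcSet n (deleteArc n i B) := by
  have hfacts : ∀ q ∈ B.erase (i, n + 2), ((1 ≤ q.1 ∧ q.1 < q.2 ∧ q.2 ≤ n + 1) ∧ q.1 ≠ i ∧
      q.2 ≠ i ∧ q.2 + 1 ≠ i) ∧
      ((q.1 ≤ i ∧ predAbove i q.1 = q.1) ∨ (i < q.1 ∧ predAbove i q.1 = q.1 - 1)) ∧
      ((q.2 ≤ i ∧ predAbove i q.2 = q.2) ∨ (i < q.2 ∧ predAbove i q.2 = q.2 - 1)) :=
    fun q hq => ⟨hB.avoid_of_mem_erase hi hq, predAbove_cases i q.1, predAbove_cases i q.2⟩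
  have := hB.bounds _ hi
  refine ⟨fun p hp => ?_, fun p hp p' hp' hne => ?_, fun p hp p' hp' => ?_⟩
  · obtain ⟨q, hq', rfl⟩ := mem_image.mp hp
    have := hfacts q hq'; dsimp only [Prod.map_fst, Prod.map_snd] at *; omega
  · obtain ⟨q, hq', rfl⟩ := mem_image.mp hp
    obtain ⟨q', hq'', rfl⟩ := mem_image.mp hp'
    have hqq : q ≠ q' := by rintro rfl; exact hne rfl
    have := hB.disjoint q (mem_of_mem_erase hq') q' (mem_of_mem_erase hq'') hqq
    have := hfacts q hq'; have := hfacts q' hq''; dsimp only [Prod.map_fst, Prod.map_snd]; omega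
  · obtain ⟨q, hq', rfl⟩ := mem_image.mp hp
    obtain ⟨q', hq'', rfl⟩ := mem_image.mp hp'
    have := hB.no_align q (mem_of_mem_erase hq') q' (mem_of_mem_erase hq'')
    have := hfacts q hq'; have := hfacts q' hq''; dsimp only [Prod.map_fst, Prod.map_snd]; omega

lemma card_deleteArc (hB : IsAlignFreeArcSet (n + 2) B) (hi : (i, n + 2) ∈ B) :
    (deleteArc n i B).card + 1 = B.card := by
  rw [deleteArc, card_image_of_injOn, card_erase_add_one hi]
  intro p hp q hq hpq
  have := hB.avoid_of_mem_erase hi hp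
  have := hB.avoid_of_mem_erase hi hq
  have := predAbove_cases i p.1; have := predAbove_cases i p.2
  have := predAbove_cases i q.1; have := predAbove_cases i q.2
  simp only [Prod.map, Prod.mk.injEq] at hpq
  exact Prod.ext (by omega) (by omega)

lemma mem_insertionSlots_deleteArc (hB : IsAlignFreeArcSet (n + 2) B) (hi : (i, n + 2) ∈ B) :
    i ∈ insertionSlots n (deleteArc n i B) := by
  have := hB.bounds _ hi
  refine mem_filter.mpr ⟨mem_Icc.mpr (by dsimp only at this; omega), fun p hp => ?_⟩
  obtain ⟨q, hq, rfl⟩ := mem_image.mp hp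
  have := hB.avoid_of_mem_erase hi hq
  have := predAbove_cases i q.2
  dsimp only [Prod.map_snd]
  omega

lemma insertArc_deleteArc (hB : IsAlignFreeArcSet (n + 2) B) (hi : (i, n + 2) ∈ B) :
    insertArc n i (deleteArc n i B) = B := by
  have hid : ∀ q ∈ B.erase (i, n + 2),
      (Prod.map (succAbove i) (succAbove i) ∘ Prod.map (predAbove i) (predAbove i)) q = id q := by
    intro q hq
    have := hB.avoid_of_mem_erase hi hq
    exact Prod.ext (succAbove_predAbove this.2.1) (succAbove_predAbove this.2.2.1)
  rw [insertArc, deleteArc, image_image, image_congr hid, image_id, insert_erase hi]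

end deleteArc

lemma card_filter_matched_arcSetsOfCard (n k : ℕ) :
    ((arcSetsOfCard (n + 2) (k + 1)).filter fun B => ∃ p ∈ B, p.2 = n + 2).card =
      (n + 1 - k) * (arcSetsOfCard n k).card := by
  have hinsert : ((arcSetsOfCard n k).sigma (insertionSlots n)).card =
      ((arcSetsOfCard (n + 2) (k + 1)).filter fun B => ∃ p ∈ B, p.2 = n + 2).card := by
    refine card_bij (fun x _ => insertArc n x.2 x.1) ?_ ?_ ?_
    · rintro ⟨A, i⟩ hx
      obtain ⟨hA, hi⟩ := mem_sigma.mp hx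
      obtain ⟨hA, hk⟩ := mem_arcSetsOfCard.mp hA
      have hcard := card_insertArc (i := i) fun q hq => (hA.bounds q hq).2.2
      exact mem_filter.mpr ⟨mem_arcSetsOfCard.mpr ⟨isAlignFreeArcSet_insertArc hA hi,
        hk ▸ hcard⟩, _, mem_insert_self _ _, rfl⟩
    · rintro ⟨A, i⟩ hx ⟨A', i'⟩ hx' h
      obtain ⟨hA, -⟩ := mem_arcSetsOfCard.mp (mem_sigma.mp hx).1
      obtain ⟨hA', -⟩ := mem_arcSetsOfCard.mp (mem_sigma.mp hx').1
      obtain ⟨rfl, rfl⟩ := insertArc_injective (fun q hq => (hA.bounds q hq).2.2)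
        (fun q hq => (hA'.bounds q hq).2.2) h
      rfl
    · intro B hB
      obtain ⟨hB, ⟨i, m⟩, hi, rfl⟩ := mem_filter.mp hB
      obtain ⟨hB, hk⟩ := mem_arcSetsOfCard.mp hB
      refine ⟨⟨deleteArc n i B, i⟩, mem_sigma.mpr ⟨mem_arcSetsOfCard.mpr
        ⟨isAlignFreeArcSet_deleteArc hB hi, ?_⟩, mem_insertionSlots_deleteArc hB hi⟩,
        insertArc_deleteArc hB hi⟩
      have := card_deleteArc hB hi
      dsimp only
      omega
  rw [← hinsert, card_sigma, sum_congr rfl fun A hA => ?_, sum_const, smul_eq_mul, mul_comm]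
  obtain ⟨hA, hk⟩ := mem_arcSetsOfCard.mp hA
  rw [card_insertionSlots hA, hk]

lemma card_arcSetsOfCard_succ_succ (n k : ℕ) :
    (arcSetsOfCard (n + 2) (k + 1)).card =
      (arcSetsOfCard (n + 1) (k + 1)).card + (n + 1 - k) * (arcSetsOfCard n k).card := by
  rw [← card_filter_matched_arcSetsOfCard, ← filter_unmatched_arcSetsOfCard (n + 1)]
  rw [add_comm (card _)]
  exact (card_filter_add_card_filter_not fun B : Finset (ℕ × ℕ) => ∃ p ∈ B, p.2 = n + 2).symm

def esymmIcc (m k : ℕ) : ℕ := ∑ S ∈ (Icc 1 m).powersetCard k, ∏ x ∈ S, x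

lemma esymmIcc_zero_right (m : ℕ) : esymmIcc m 0 = 1 := by
  simp [esymmIcc]

lemma esymmIcc_eq_zero {m k : ℕ} (h : m < k) : esymmIcc m k = 0 := by
  rw [esymmIcc, powersetCard_eq_empty.mpr (by simpa using h), sum_empty]

lemma esymmIcc_succ_succ (m k : ℕ) :
    esymmIcc (m + 1) (k + 1) = esymmIcc m (k + 1) + (m + 1) * esymmIcc m k := by
  have hm : m + 1 ∉ Icc 1 m := by simp
  have hdisj : Disjoint ((Icc 1 m).powersetCard (k + 1))
      (((Icc 1 m).powersetCard k).image (insert (m + 1))) := by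
    refine disjoint_right.mpr fun S hS hS' => hm ?_
    obtain ⟨T, -, rfl⟩ := mem_image.mp hS
    exact (mem_powersetCard.mp hS').1 (mem_insert_self _ _)
  have hnot : ∀ T ∈ (Icc 1 m).powersetCard k, m + 1 ∉ T :=
    fun T hT h => hm ((mem_powersetCard.mp hT).1 h)
  rw [esymmIcc, ← insert_Icc_right_eq_Icc_add_one (by omega), powersetCard_succ_insert hm,
    sum_union hdisj, sum_image, esymmIcc, esymmIcc, mul_sum]
  · exact congrArg _ (sum_congr rfl fun T hT => prod_insert (hnot T hT))
  · intro S hS T hT h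
    rw [← erase_insert (hnot S hS), ← erase_insert (hnot T hT)]
    exact congrArg (·.erase (m + 1)) h

theorem card_arcSetsOfCard (n k : ℕ) : (arcSetsOfCard n k).card = esymmIcc (n - k) k := by
  induction n using Nat.strong_induction_on generalizing k with
  | _ n ih =>
  rcases lt_or_ge n (2 * k) with h | h
  · rw [arcSetsOfCard_eq_empty h, esymmIcc_eq_zero (by omega), card_empty]
  rcases k with _ | k
  · rw [arcSetsOfCard_zero_right, esymmIcc_zero_right, card_singleton]
  obtain ⟨n, rfl⟩ : ∃ m, n = m + 2 := ⟨n - 2, by omega⟩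
  rw [card_arcSetsOfCard_succ_succ, ih (n + 1) (by omega), ih n (by omega),
    show n + 2 - (k + 1) = n - k + 1 by omega, esymmIcc_succ_succ,
    show n + 1 - (k + 1) = n - k by omega, show n + 1 - k = n - k + 1 by omega]

lemma eq_of_pair_eq {p q : ℕ × ℕ} (hp : p.1 < p.2) (hq : q.1 < q.2)
    (h : ({p.1, p.2} : Finset ℕ) = {q.1, q.2}) : p = q := by
  have := Set.pair_eq_pair_iff.mp (by simpa using congrArg (↑· : Finset ℕ → Set ℕ) h)
  exact Prod.ext (by omega) (by omega)

def arcsOf {n : ℕ} (P : Finpartition (Icc 1 n)) : Finset (ℕ × ℕ) :=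
  (Icc 1 n ×ˢ Icc 1 n).filter fun p => p.1 < p.2 ∧ {p.1, p.2} ∈ P.parts

section arcsOf

variable {n : ℕ} {P : Finpartition (Icc 1 n)}

lemma mem_arcsOf_of_mem_part (hM : IsMatching P) {C : Finset ℕ} (hC : C ∈ P.parts) {x y : ℕ}
    (hx : x ∈ C) (hy : y ∈ C) (hxy : x < y) : (x, y) ∈ arcsOf P ∧ C = {x, y} := by
  have hCeq : ({x, y} : Finset ℕ) = C :=
    eq_of_subset_of_card_le (insert_subset hx (singleton_subset_iff.mpr hy))
      (by rw [card_pair hxy.ne]; exact hM C hC)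
  exact ⟨mem_filter.mpr ⟨mem_product.mpr ⟨P.le hC hx, P.le hC hy⟩, hxy, hCeq ▸ hC⟩, hCeq.symm⟩

lemma isArc_iff_mem_arcsOf (hM : IsMatching P) {p : ℕ × ℕ} : IsArc P p ↔ p ∈ arcsOf P := by
  refine ⟨fun ⟨hlt, C, hC, h1, h2, _⟩ => (mem_arcsOf_of_mem_part hM hC h1 h2 hlt).1,
    fun hp => ?_⟩
  obtain ⟨-, hlt, hpart⟩ := mem_filter.mp hp
  refine ⟨hlt, _, hpart, by simp, by simp, fun c hc => ?_⟩
  simp only [mem_insert, mem_singleton] at hc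
  omega

lemma isAlignFreeArcSet_arcsOf (hM : IsMatching P) (hNA : ¬ HasNbrAlign P) :
    IsAlignFreeArcSet n (arcsOf P) where
  bounds p hp := by
    obtain ⟨hprod, hlt, -⟩ := mem_filter.mp hp
    simp only [mem_product, mem_Icc] at hprod
    omega
  disjoint p hp q hq hne := by
    obtain ⟨-, hltp, hpartp⟩ := mem_filter.mp hp
    obtain ⟨-, hltq, hpartq⟩ := mem_filter.mp hq
    have hdisj : Disjoint ({p.1, p.2} : Finset ℕ) {q.1, q.2} :=
      P.disjoint hpartp hpartq fun h => hne (eq_of_pair_eq hltp hltq h)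
    simp only [disjoint_insert_left, disjoint_insert_right, disjoint_singleton, mem_insert,
      mem_singleton] at hdisj
    omega
  no_align p hp q hq h :=
    hNA ⟨p, q, (isArc_iff_mem_arcsOf hM).mpr hp, (isArc_iff_mem_arcsOf hM).mpr hq, h⟩

end arcsOf

def matchingParts (n : ℕ) (A : Finset (ℕ × ℕ)) : Finset (Finset ℕ) :=
  A.image (fun p => {p.1, p.2}) ∪
    ((Icc 1 n).filter fun x => ∀ p ∈ A, x ≠ p.1 ∧ x ≠ p.2).image singleton

lemma mem_matchingParts {n : ℕ} {A : Finset (ℕ × ℕ)} {B : Finset ℕ} :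
    B ∈ matchingParts n A ↔ (∃ p ∈ A, {p.1, p.2} = B) ∨
      ∃ x ∈ Icc 1 n, (∀ p ∈ A, x ≠ p.1 ∧ x ≠ p.2) ∧ {x} = B := by
  simp only [matchingParts, mem_union, mem_image, mem_filter, and_assoc]

lemma parts_eq_matchingParts {n : ℕ} {P : Finpartition (Icc 1 n)} (hM : IsMatching P) :
    P.parts = matchingParts n (arcsOf P) := by
  ext B
  rw [mem_matchingParts]
  constructor
  · intro hB
    rcases lt_or_ge 1 B.card with h | h
    · obtain ⟨x, hx, y, hy, hxy⟩ := one_lt_card.mp h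
      rcases hxy.lt_or_gt with hxy | hxy
      · obtain ⟨harc, rfl⟩ := mem_arcsOf_of_mem_part hM hB hx hy hxy
        exact .inl ⟨_, harc, rfl⟩
      · obtain ⟨harc, rfl⟩ := mem_arcsOf_of_mem_part hM hB hy hx hxy
        exact .inl ⟨_, harc, rfl⟩
    obtain ⟨x, rfl⟩ := card_eq_one.mp (le_antisymm h (card_pos.mpr (P.nonempty_of_mem_parts hB)))
    refine .inr ⟨x, P.le hB (mem_singleton_self x), fun p hp => ?_, rfl⟩
    obtain ⟨-, hlt, hpart⟩ := mem_filter.mp hp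
    have hx : x ∉ ({p.1, p.2} : Finset ℕ) := fun hxp => by
      have := P.eq_of_mem_parts hB hpart (mem_singleton_self x) hxp
      have h1 : p.1 ∈ ({x} : Finset ℕ) := this ▸ mem_insert_self _ _
      have h2 : p.2 ∈ ({x} : Finset ℕ) := this ▸ by simp
      rw [mem_singleton] at h1 h2
      omega
    simp only [mem_insert, mem_singleton, not_or] at hx
    exact hx
  · rintro (⟨p, hp, rfl⟩ | ⟨x, hx, hfree, rfl⟩)
    · exact (mem_filter.mp hp).2.2
    obtain ⟨C, hC, hxC⟩ := P.exists_mem hx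
    suffices C = {x} from this ▸ hC
    refine eq_singleton_iff_unique_mem.mpr ⟨hxC, fun y hy => ?_⟩
    by_contra hyx
    rcases lt_or_gt_of_ne hyx with h | h
    · exact (hfree _ (mem_arcsOf_of_mem_part hM hC hy hxC h).1).2 rfl
    · exact (hfree _ (mem_arcsOf_of_mem_part hM hC hxC hy h).1).1 rfl

section matchingOfArcs

variable {n : ℕ} {A : Finset (ℕ × ℕ)}

lemma subset_of_mem_matchingParts (hA : IsAlignFreeArcSet n A) :
    ∀ B ∈ matchingParts n A, B ⊆ Icc 1 n := by
  intro B hB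
  rcases mem_matchingParts.mp hB with ⟨p, hp, rfl⟩ | ⟨x, hx, -, rfl⟩
  · have := hA.bounds p hp
    simp only [insert_subset_iff, singleton_subset_iff, mem_Icc]
    omega
  · exact singleton_subset_iff.mpr hx

lemma existsUnique_mem_matchingParts (hA : IsAlignFreeArcSet n A) :
    ∀ x ∈ Icc 1 n, ∃! B, B ∈ matchingParts n A ∧ x ∈ B := by
  intro x hx
  by_cases hcov : ∃ p ∈ A, x = p.1 ∨ x = p.2
  · obtain ⟨p, hp, hxp⟩ := hcov
    refine ⟨{p.1, p.2}, ⟨mem_matchingParts.mpr (.inl ⟨p, hp, rfl⟩), by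
      rcases hxp with rfl | rfl <;> simp⟩, ?_⟩
    rintro B ⟨hB, hxB⟩
    rcases mem_matchingParts.mp hB with ⟨q, hq, rfl⟩ | ⟨y, -, hfree, rfl⟩
    · obtain rfl : q = p := by
        by_contra hne
        have := hA.disjoint q hq p hp hne
        simp only [mem_insert, mem_singleton] at hxB
        omega
      rfl
    · rw [mem_singleton] at hxB
      have := hfree p hp
      omega
  · push Not at hcov
    refine ⟨{x}, ⟨mem_matchingParts.mpr (.inr ⟨x, hx, hcov, rfl⟩), mem_singleton_self x⟩, ?_⟩
    rintro B ⟨hB, hxB⟩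
    rcases mem_matchingParts.mp hB with ⟨q, hq, rfl⟩ | ⟨y, -, -, rfl⟩
    · have := hcov q hq
      simp only [mem_insert, mem_singleton] at hxB
      omega
    · rw [mem_singleton.mp hxB]

lemma empty_notMem_matchingParts : ∅ ∉ matchingParts n A := by
  rw [mem_matchingParts]
  rintro (⟨p, -, h⟩ | ⟨x, -, -, h⟩) <;> simp at h

def matchingOfArcs (A : Finset (ℕ × ℕ)) (hA : IsAlignFreeArcSet n A) :
    Finpartition (Icc 1 n) :=
  .ofExistsUnique (matchingParts n A) (subset_of_mem_matchingParts hA)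
    (existsUnique_mem_matchingParts hA) empty_notMem_matchingParts

lemma isMatching_matchingOfArcs (hA : IsAlignFreeArcSet n A) :
    IsMatching (matchingOfArcs A hA) := by
  intro B hB
  rcases mem_matchingParts.mp hB with ⟨p, -, rfl⟩ | ⟨x, -, -, rfl⟩
  · exact card_le_two
  · simp

lemma arcsOf_matchingOfArcs (hA : IsAlignFreeArcSet n A) : arcsOf (matchingOfArcs A hA) = A := by
  ext p
  rw [arcsOf, mem_filter, matchingOfArcs, Finpartition.ofExistsUnique_parts, mem_matchingParts,
    mem_product, mem_Icc, mem_Icc]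
  constructor
  · rintro ⟨-, hlt, ⟨q, hq, hqp⟩ | ⟨x, -, -, hx⟩⟩
    · rwa [← eq_of_pair_eq (hA.bounds q hq).2.1 hlt hqp]
    · have h1 : p.1 ∈ ({x} : Finset ℕ) := hx ▸ mem_insert_self _ _
      have h2 : p.2 ∈ ({x} : Finset ℕ) := hx ▸ by simp
      rw [mem_singleton] at h1 h2
      omega
  · intro hp
    have := hA.bounds p hp
    exact ⟨by omega, this.2.1, .inl ⟨p, hp, rfl⟩⟩

end matchingOfArcs

lemma ncard_matchings_eq_card_arcSets (n : ℕ) :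
    {P : Finpartition (Icc 1 n) | IsMatching P ∧ ¬ HasNbrAlign P}.ncard = (arcSets n).card := by
  have himage : arcsOf '' {P : Finpartition (Icc 1 n) | IsMatching P ∧ ¬ HasNbrAlign P} =
      arcSets n := by
    ext A
    simp only [Set.mem_image, Set.mem_ofPred_eq, mem_coe, mem_arcSets]
    refine ⟨fun ⟨P, ⟨hM, hNA⟩, hPA⟩ => hPA ▸ isAlignFreeArcSet_arcsOf hM hNA, fun hA => ?_⟩
    refine ⟨matchingOfArcs A hA, ⟨isMatching_matchingOfArcs hA, ?_⟩, arcsOf_matchingOfArcs hA⟩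
    rintro ⟨p, q, hp, hq, hpq⟩
    rw [isArc_iff_mem_arcsOf (isMatching_matchingOfArcs hA), arcsOf_matchingOfArcs] at hp hq
    exact hA.no_align p hp q hq hpq
  rw [← Set.ncard_coe_finset, ← himage, Set.InjOn.ncard_image fun P hP Q hQ h =>
    Finpartition.ext (by rw [parts_eq_matchingParts hP.1, parts_eq_matchingParts hQ.1, h])]

theorem stmt_2_general (n : ℕ) :
    {P : Finpartition (Finset.Icc 1 n) | IsMatching P ∧ ¬ HasNbrAlign P}.ncard =
      ∑ k ∈ Finset.range (n / 2 + 1),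
        ∑ S ∈ (Finset.Icc 1 (n - k)).powersetCard k, ∏ x ∈ S, x := by
  rw [ncard_matchings_eq_card_arcSets, card_arcSets_eq_sum]
  exact sum_congr rfl fun k _ => card_arcSetsOfCard n k

/-- The total number of partial matchings of `[n]` with no neighbor alignments
equals `∑_{k=0}^{⌊n/2⌋} e_k(1, 2, ..., n-k)`. -/
theorem stmt_2 (n : ℕ) (hn : 1 ≤ n) :
    {P : Finpartition (Finset.Icc 1 n) | IsMatching P ∧ ¬ HasNbrAlign P}.ncard =
      ∑ k ∈ Finset.range (n / 2 + 1),
        ∑ S ∈ (Finset.Icc 1 (n - k)).powersetCard k, ∏ x ∈ S, x :=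
  stmt_2_general n
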